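/- arXiv:2410.07378 — 9 statements merged into one kernel-verified Lean document; each statement's English description precedes it below -/
import Mathlib

section
/- Let θ > 1, α = 1 + ln θ, L > 0, and define ψ : [0,1] → ℝ by ψ(x) = L for x ∈ [0, 1/α) and ψ(x) = L·exp(α·x − 1) for x ∈ [1/α, 1]. Then for all x₁, x₂ with 0 ≤ x₁ ≤ x₂ ≤ 1, we have ∫_{x₁}^{x₂} ψ(x) dx ≥ (ψ(x₂) − ψ(x₁))/α. -/
/-! The exponential branch `E x = L * exp (α * x - 1)` satisfies `E' = α E`, so its integral over
`[x₁, x₂]` is `(E x₂ - E x₁) / α`, and `ψ = max L E` dominates it. If `x₂` lies on the exponential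
branch then `ψ x₂ - ψ x₁ ≤ E x₂ - E x₁`; otherwise `ψ x₁ = ψ x₂ = L` and the claim is `0 ≤ ∫ ψ`. -/

open Real Set

section ExpBranch

variable {α : ℝ} (L : ℝ)

theorem integral_mul_exp_mul_sub_one (hα : α ≠ 0) (a b : ℝ) :
    ∫ x in a..b, L * exp (α * x - 1) = (L * exp (α * b - 1) - L * exp (α * a - 1)) / α := by
  rw [intervalIntegral.integral_const_mul, intervalIntegral.integral_comp_mul_sub (fun x => exp x) hα,
    integral_exp, smul_eq_mul]
  field_simp

theorem ite_lt_one_div_eq_max_mul_exp (hα : 0 < α) (hL : 0 ≤ L) (x : ℝ) :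
    (if x < 1 / α then L else L * exp (α * x - 1)) = max L (L * exp (α * x - 1)) := by
  split_ifs with hx
  · have : α * x - 1 ≤ 0 := by rw [lt_div_iff₀ hα] at hx; linarith
    exact (max_eq_left (mul_le_of_le_one_right hL (exp_le_one_iff.2 this))).symm
  · have : 0 ≤ α * x - 1 := by rw [not_lt, div_le_iff₀ hα] at hx; linarith
    exact (max_eq_right (le_mul_of_one_le_right hL (one_le_exp_iff.2 this))).symm

end ExpBranch

theorem stmt_1 (θ L α : ℝ) (hθ : 1 < θ) (hL : 0 < L) (hα : α = 1 + Real.log θ)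
    (ψ : ℝ → ℝ)
    (hψ : ∀ x : ℝ, ψ x = if x < 1/α then L else L * Real.exp (α * x - 1)) :
    ∀ x₁ x₂ : ℝ, 0 ≤ x₁ → x₁ ≤ x₂ → x₂ ≤ 1 →
      (ψ x₂ - ψ x₁) / α ≤ ∫ x in x₁..x₂, ψ x := by
  have hα0 : 0 < α := by rw [hα]; linarith [log_pos hθ]
  have hψ_max : ψ = fun x => max L (L * exp (α * x - 1)) :=
    funext fun x => (hψ x).trans (ite_lt_one_div_eq_max_mul_exp L hα0 hL.le x)
  have hE_le : ∀ x, L * exp (α * x - 1) ≤ ψ x := by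
    intro x; rw [hψ_max]; exact le_max_right _ _
  intro x₁ x₂ _ h12 _
  rcases lt_or_ge x₂ (1 / α) with h2 | h2
  · rw [hψ x₂, hψ x₁, if_pos h2, if_pos (h12.trans_lt h2), sub_self, zero_div]
    refine intervalIntegral.integral_nonneg h12 fun x _ => ?_
    rw [hψ_max]; exact hL.le.trans (le_max_left _ _)
  · have hψ_x₂ : ψ x₂ = L * exp (α * x₂ - 1) := by rw [hψ x₂, if_neg h2.not_gt]
    calc (ψ x₂ - ψ x₁) / α ≤ (L * exp (α * x₂ - 1) - L * exp (α * x₁ - 1)) / α := by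
          rw [hψ_x₂]; gcongr; exact hE_le x₁
      _ = ∫ x in x₁..x₂, L * exp (α * x - 1) :=
          (integral_mul_exp_mul_sub_one L hα0.ne' x₁ x₂).symm
      _ ≤ ∫ x in x₁..x₂, ψ x := by
          refine intervalIntegral.integral_mono_on h12
            ((by fun_prop : Continuous _).intervalIntegrable _ _) ?_ fun x _ => hE_le x
          rw [hψ_max]; exact (by fun_prop : Continuous _).intervalIntegrable _ _
end

section
/- Let L > 0, U ≥ L, θ = U/L, C > 0, and α > 0. Suppose g : [L, U] → ℝ is continuous, nondecreasing, and satisfies v·g(v) − ∫_L^v g(u) du ≥ C·v/α for all v ∈ [L, U]. Then g(v) ≥ (C/α)·(1 + ln(v/L)) for all v ∈ [L, U]. Consequently, if additionally g(U) ≤ C, then α ≥ 1 + ln θ. -/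
/-!
Writing `F v = ∫_L^v g`, the hypothesis says `v F'(v) - F(v) ≥ c v` with `c = C / α`, i.e.
`(F v / v)' ≥ c / v`. Integrating from `L` (where `F = 0`) gives `F v / v ≥ c log (v / L)`, and
feeding this back into the hypothesis divided by `v` yields `g v ≥ c (1 + log (v / L))`.
At `v = U` together with `g U ≤ C` this forces `α ≥ 1 + log θ`.
-/

open Real Set intervalIntegral MeasureTheory

section Gronwall

variable {g : ℝ → ℝ} {a b c : ℝ}

theorem hasDerivAt_primitive_div (hg : ContinuousOn g (Icc a b)) {x : ℝ} (hx : x ∈ Ioo a b)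
    (hx0 : x ≠ 0) :
    HasDerivAt (fun v => (∫ u in a..v, g u) / v) ((x * g x - ∫ u in a..x, g u) / x ^ 2) x := by
  have hint : IntervalIntegrable g volume a x :=
    (hg.mono (Icc_subset_Icc_right hx.2.le)).intervalIntegrable_of_Icc hx.1.le
  have hmeas : StronglyMeasurableAtFilter g (nhds x) volume :=
    (hg.mono Ioo_subset_Icc_self).stronglyMeasurableAtFilter isOpen_Ioo x hx
  have hcont : ContinuousAt g x := hg.continuousAt (Icc_mem_nhds hx.1 hx.2)
  exact ((integral_hasDerivAt_right hint hmeas hcont).div (hasDerivAt_id' x) hx0).congr_deriv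
    (by ring)

theorem monotoneOn_primitive_div_sub_mul_log (ha : 0 < a) (hg : ContinuousOn g (Icc a b))
    (hineq : ∀ v ∈ Icc a b, c * v ≤ v * g v - ∫ u in a..v, g u) :
    MonotoneOn (fun v => (∫ u in a..v, g u) / v - c * log v) (Icc a b) := by
  have hpos : ∀ v ∈ Icc a b, v ≠ 0 := fun v hv => (ha.trans_le hv.1).ne'
  refine monotoneOn_of_hasDerivWithinAt_nonneg (convex_Icc a b) ?_
    (f' := fun x => (x * g x - ∫ u in a..x, g u) / x ^ 2 - c * x⁻¹) ?_ ?_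
  · have hprim : ContinuousOn (fun v => ∫ u in a..v, g u) (Icc a b) := by
      rcases le_or_gt a b with hab | hab
      · rw [← uIcc_of_le hab] at hg ⊢
        exact continuousOn_primitive_interval hg.integrableOn_uIcc
      · simp [Icc_eq_empty_of_lt hab]
    exact (hprim.div continuousOn_id hpos).sub
      (continuousOn_const.mul (continuousOn_log.mono hpos))
  · rw [interior_Icc]
    intro x hx
    have hx0 := hpos x (Ioo_subset_Icc_self hx)
    exact ((hasDerivAt_primitive_div hg hx hx0).sub
      ((hasDerivAt_log hx0).const_mul c)).hasDerivWithinAt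
  · rw [interior_Icc]
    intro x hx
    have hx0 : 0 < x := ha.trans hx.1
    rw [sub_nonneg, le_div_iff₀ (by positivity)]
    calc c * x⁻¹ * x ^ 2 = c * x := by field_simp
      _ ≤ _ := hineq x (Ioo_subset_Icc_self hx)

theorem mul_log_div_le_primitive_div (ha : 0 < a) (hg : ContinuousOn g (Icc a b))
    (hineq : ∀ v ∈ Icc a b, c * v ≤ v * g v - ∫ u in a..v, g u) {v : ℝ} (hv : v ∈ Icc a b) :
    c * log (v / a) ≤ (∫ u in a..v, g u) / v := by
  have hmono := monotoneOn_primitive_div_sub_mul_log ha hg hineq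
    (left_mem_Icc.mpr (hv.1.trans hv.2)) hv hv.1
  simp only [integral_same, zero_div, zero_sub] at hmono
  rw [log_div (ha.trans_le hv.1).ne' ha.ne']
  linarith

theorem mul_one_add_log_div_le (ha : 0 < a) (hg : ContinuousOn g (Icc a b))
    (hineq : ∀ v ∈ Icc a b, c * v ≤ v * g v - ∫ u in a..v, g u) {v : ℝ} (hv : v ∈ Icc a b) :
    c * (1 + log (v / a)) ≤ g v := by
  have hv0 : 0 < v := ha.trans_le hv.1
  have hlog := mul_log_div_le_primitive_div ha hg hineq hv
  have hdiv : c + (∫ u in a..v, g u) / v ≤ g v := by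
    rw [← mul_le_mul_iff_right₀ hv0]
    calc v * (c + (∫ u in a..v, g u) / v) = c * v + ∫ u in a..v, g u := by field_simp
      _ ≤ v * g v := by linarith [hineq v hv]
  linarith

end Gronwall

theorem stmt_3_general (L U θ C α : ℝ) (hL : 0 < L) (hLU : L ≤ U) (hθ : θ = U / L)
    (hC : 0 < C) (hα : 0 < α)
    (g : ℝ → ℝ)
    (hg_cont : ContinuousOn g (Set.Icc L U))
    (hg_ineq : ∀ v ∈ Set.Icc L U, C * v / α ≤ v * g v - ∫ u in L..v, g u) :
    (∀ v ∈ Set.Icc L U, (C / α) * (1 + Real.log (v / L)) ≤ g v) ∧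
      (g U ≤ C → 1 + Real.log θ ≤ α) := by
  have hineq : ∀ v ∈ Icc L U, C / α * v ≤ v * g v - ∫ u in L..v, g u := fun v hv => by
    simpa only [div_mul_eq_mul_div] using hg_ineq v hv
  have hbound := fun v (hv : v ∈ Icc L U) => mul_one_add_log_div_le hL hg_cont hineq hv
  refine ⟨hbound, fun hgU => ?_⟩
  have hU : C / α * (1 + log θ) ≤ C := hθ ▸ (hbound U (right_mem_Icc.mpr hLU)).trans hgU
  rw [div_mul_eq_mul_div, div_le_iff₀ hα] at hU
  exact le_of_mul_le_mul_left hU hC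

theorem stmt_3 (L U θ C α : ℝ) (hL : 0 < L) (hLU : L ≤ U) (hθ : θ = U / L)
    (hC : 0 < C) (hα : 0 < α)
    (g : ℝ → ℝ)
    (hg_cont : ContinuousOn g (Set.Icc L U))
    (hg_mono : MonotoneOn g (Set.Icc L U))
    (hg_ineq : ∀ v ∈ Set.Icc L U, C * v / α ≤ v * g v - ∫ u in L..v, g u) :
    (∀ v ∈ Set.Icc L U, (C / α) * (1 + Real.log (v / L)) ≤ g v) ∧
      (g U ≤ C → 1 + Real.log θ ≤ α) :=
  stmt_3_general L U θ C α hL hLU hθ hC hα g hg_cont hg_ineq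
end

section
/- For θ > 1 let ω(θ) ∈ (0,1) be the unique solution of e^ω/(e^ω − 1) = (ln θ)/(1 − ω), and let α(θ) = e^{ω(θ)}/(e^{ω(θ)} − 1). Then α(θ) → e/(e − 1) as θ → 1⁺. -/
open Real Set Filter

lemma aux_mono (x y : ℝ) (hx : 0 < x) (hxy : x ≤ y) :
    Real.exp y / (Real.exp y - 1) ≤ Real.exp x / (Real.exp x - 1) := by
  have h1 : (0:ℝ) < Real.exp x - 1 := by
    nlinarith [Real.add_one_lt_exp (ne_of_gt hx)]
  have h2 : Real.exp x ≤ Real.exp y := Real.exp_le_exp.2 hxy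
  rw [div_le_div_iff₀ (by linarith) h1]
  nlinarith

theorem stmt_5 (ω : ℝ → ℝ)
    (hω : ∀ θ : ℝ, 1 < θ → ω θ ∈ Set.Ioo (0:ℝ) 1 ∧
      Real.exp (ω θ) / (Real.exp (ω θ) - 1) = Real.log θ / (1 - ω θ)) :
    Filter.Tendsto (fun θ => Real.exp (ω θ) / (Real.exp (ω θ) - 1))
      (nhdsWithin 1 (Set.Ioi 1)) (nhds (Real.exp 1 / (Real.exp 1 - 1))) := by
  have he1 : (0:ℝ) < Real.exp 1 - 1 := by
    nlinarith [Real.add_one_lt_exp (one_ne_zero)]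
  have hmem : ∀ᶠ θ in nhdsWithin (1:ℝ) (Set.Ioi 1), θ ∈ Set.Ioi (1:ℝ) :=
    eventually_mem_nhdsWithin
  have hlt : ∀ᶠ θ in nhdsWithin (1:ℝ) (Set.Ioi 1), θ < Real.exp 1 := by
    apply eventually_nhdsWithin_of_eventually_nhds
    exact Filter.Tendsto.eventually_lt_const (by nlinarith [Real.add_one_lt_exp (one_ne_zero)])
      tendsto_id
  apply tendsto_of_tendsto_of_tendsto_of_le_of_le'
    (g := fun _ => Real.exp 1 / (Real.exp 1 - 1))
    (h := fun θ => Real.exp (1 - Real.log θ) / (Real.exp (1 - Real.log θ) - 1))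
  · exact tendsto_const_nhds
  · have hl : ContinuousAt (fun θ : ℝ => Real.exp (1 - Real.log θ)) 1 :=
      Real.continuous_exp.continuousAt.comp
        (continuousAt_const.sub (Real.continuousAt_log one_ne_zero))
    have hc : ContinuousAt
        (fun θ : ℝ => Real.exp (1 - Real.log θ) / (Real.exp (1 - Real.log θ) - 1)) 1 := by
      apply hl.div (hl.sub continuousAt_const)
      simp [Real.log_one]
      linarith
    have := hc.tendsto.mono_left (nhdsWithin_le_nhds (s := Set.Ioi 1))
    simpa [Real.log_one] using this
  · filter_upwards [hmem] with θ hθ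
    obtain ⟨⟨hω0, hω1⟩, _⟩ := hω θ hθ
    exact aux_mono (ω θ) 1 hω0 hω1.le
  · filter_upwards [hmem, hlt] with θ hθ hθe
    have hθ' : (1:ℝ) < θ := hθ
    obtain ⟨⟨hω0, hω1⟩, heq⟩ := hω θ hθ'
    have hlog0 : 0 < Real.log θ := Real.log_pos hθ'
    have hlog1 : Real.log θ < 1 := by
      have := Real.log_lt_log (by linarith : (0:ℝ) < θ) hθe
      simpa [Real.log_exp] using this
    have hd : (0:ℝ) < Real.exp (ω θ) - 1 := by
      nlinarith [Real.add_one_lt_exp (ne_of_gt hω0)]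
    have h1 : 1 < Real.exp (ω θ) / (Real.exp (ω θ) - 1) :=
      (one_lt_div hd).2 (by linarith)
    have h2 : 1 - ω θ < Real.log θ := by
      rw [heq] at h1
      exact (one_lt_div (by linarith : (0:ℝ) < 1 - ω θ)).1 h1
    exact aux_mono (1 - Real.log θ) (ω θ) (by linarith) (by linarith)
end

section
/- Let θ > 1, let ω ∈ (0,1) satisfy e^ω/(e^ω − 1) = (ln θ)/(1 − ω), let α = e^ω/(e^ω − 1), L > 0, U = L·θ, and define ψ : [0,1] → ℝ by ψ(x) = ((α − 1)·L/α)·e^x for x ∈ [0, ω) and ψ(x) = U·e^{α(x − 1)} for x ∈ [ω, 1]. Then for every y ∈ [0, ω), ψ(y) − ∫₀^y ψ(x) dx ≤ (1 − 1/α)·L. -/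
open Real Set

theorem stmt_7 (θ ω α L U : ℝ) (hθ : 1 < θ) (hω : ω ∈ Set.Ioo (0:ℝ) 1)
    (hωeq : Real.exp ω / (Real.exp ω - 1) = Real.log θ / (1 - ω))
    (hα : α = Real.exp ω / (Real.exp ω - 1))
    (hL : 0 < L) (hU : U = L * θ)
    (ψ : ℝ → ℝ)
    (hψ : ∀ x : ℝ, ψ x = if x < ω then ((α - 1) * L / α) * Real.exp x
      else U * Real.exp (α * (x - 1))) :
    ∀ y ∈ Set.Ico (0:ℝ) ω, ψ y - (∫ x in (0:ℝ)..y, ψ x) ≤ (1 - 1/α) * L := by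
  intro y hy
  obtain ⟨hy0, hyω⟩ := hy
  have hexp1 : 1 < Real.exp ω := by
    simpa using Real.exp_lt_exp.mpr hω.1
  have hαpos : 0 < α := by
    rw [hα]
    exact div_pos (by positivity) (by linarith)
  set c : ℝ := (α - 1) * L / α with hc
  have hint : (∫ x in (0:ℝ)..y, ψ x) = ∫ x in (0:ℝ)..y, c * Real.exp x := by
    apply intervalIntegral.integral_congr
    intro x hx
    rw [Set.uIcc_of_le hy0] at hx
    have : x < ω := lt_of_le_of_lt hx.2 hyω
    simp [hψ x, this]
  have h2 : (∫ x in (0:ℝ)..y, c * Real.exp x) = c * (Real.exp y - 1) := by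
    rw [intervalIntegral.integral_const_mul, integral_exp]
    simp
  have hψy : ψ y = c * Real.exp y := by simp [hψ y, hyω]
  rw [hint, h2, hψy]
  have hce : c = (1 - 1/α) * L := by
    rw [hc]; field_simp
  rw [hce]
  nlinarith [Real.exp_pos y, sq_nonneg ((1 - 1/α) * L)]
end

section
/- Let θ > 1, let ω ∈ (0,1) satisfy e^ω/(e^ω − 1) = (ln θ)/(1 − ω), let α = e^ω/(e^ω − 1), L > 0, U = L·θ, and define ψ : [0,1] → ℝ by ψ(x) = ((α − 1)·L/α)·e^x for x ∈ [0, ω) and ψ(x) = U·e^{α(x − 1)} for x ∈ [ω, 1]. Then for every y ∈ [ω, 1], ψ(y) ≤ ∫₀^y ψ(x) dx + (1 − 1/α)·ψ(y). -/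
/-! Both pieces of `ψ` are calibrated to take the value `L` at `ω`: the lower piece because
`(α - 1) (e^ω - 1) = 1`, the upper one because `α (1 - ω) = log θ`. Integrating the two
exponentials then gives `∫₀^y ψ = L/α + (ψ(y) - L)/α = ψ(y)/α`, so the inequality is in fact an
equality. -/

open Real Set intervalIntegral

lemma integral_ite_lt_eq_add {E : Type*} [NormedAddCommGroup E] [NormedSpace ℝ E]
    {f g : ℝ → E} {a b c : ℝ} (hab : a ≤ b) (hbc : b ≤ c)
    (hf : IntervalIntegrable f MeasureTheory.volume a b)
    (hg : IntervalIntegrable g MeasureTheory.volume b c) :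
    ∫ x in a..c, (if x < b then f x else g x) = (∫ x in a..b, f x) + ∫ x in b..c, g x := by
  have hlow : EqOn f (fun x => if x < b then f x else g x) (uIoo a b) := by
    intro x hx
    rw [uIoo_of_le hab] at hx
    simp [hx.2]
  have hhigh : EqOn g (fun x => if x < b then f x else g x) (uIoo b c) := by
    intro x hx
    rw [uIoo_of_le hbc] at hx
    simp [not_lt.2 hx.1.le]
  rw [← integral_add_adjacent_intervals (hf.congr_uIoo hlow) (hg.congr_uIoo hhigh),
    integral_congr_uIoo hlow, integral_congr_uIoo hhigh]

lemma integral_exp_mul_sub {c : ℝ} (hc : c ≠ 0) (d a b : ℝ) :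
    ∫ x in a..b, exp (c * (x - d)) = (exp (c * (b - d)) - exp (c * (a - d))) / c := by
  simp_rw [mul_sub]
  rw [integral_comp_mul_sub (fun x => exp x) hc, integral_exp, smul_eq_mul]
  field_simp

theorem stmt_8_general (θ ω α L U : ℝ) (hθ : 1 < θ) (hω : ω ∈ Set.Ioo (0:ℝ) 1)
    (hωeq : Real.exp ω / (Real.exp ω - 1) = Real.log θ / (1 - ω))
    (hα : α = Real.exp ω / (Real.exp ω - 1))
    (hU : U = L * θ)
    (ψ : ℝ → ℝ)
    (hψ : ∀ x : ℝ, ψ x = if x < ω then ((α - 1) * L / α) * Real.exp x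
      else U * Real.exp (α * (x - 1))) :
    ∀ y ∈ Set.Icc ω 1, ψ y ≤ (∫ x in (0:ℝ)..y, ψ x) + (1 - 1/α) * ψ y := by
  rintro y ⟨hωy, -⟩
  obtain ⟨hω0, hω1⟩ := hω
  have hexp : 1 < exp ω := one_lt_exp_iff.2 hω0
  have hα0 : 0 < α := by rw [hα]; exact div_pos (by positivity) (by linarith)
  have hlow : (α - 1) * (exp ω - 1) = 1 := by
    rw [hα]
    field_simp [(by linarith : exp ω - 1 ≠ 0)]
    ring
  have hhigh : U * exp (α * (ω - 1)) = L := by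
    have hlog : α * (ω - 1) = -log θ := by
      rw [hα, hωeq]
      field_simp [(by linarith : 1 - ω ≠ 0)]
      ring
    rw [hlog, exp_neg, exp_log (by linarith), hU]
    field_simp
  have hintegral : ∫ x in (0:ℝ)..y, ψ x = U * exp (α * (y - 1)) / α := by
    simp_rw [hψ]
    rw [integral_ite_lt_eq_add hω0.le hωy
      (Continuous.intervalIntegrable (by fun_prop) _ _)
      (Continuous.intervalIntegrable (by fun_prop) _ _), integral_const_mul,
      integral_exp, exp_zero, integral_const_mul, integral_exp_mul_sub hα0.ne']
    field_simp
    linear_combination L * hlow - hhigh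
  rw [hintegral, hψ y, if_neg (not_lt.2 hωy)]
  exact le_of_eq (by ring)

theorem stmt_8 (θ ω α L U : ℝ) (hθ : 1 < θ) (hω : ω ∈ Set.Ioo (0:ℝ) 1)
    (hωeq : Real.exp ω / (Real.exp ω - 1) = Real.log θ / (1 - ω))
    (hα : α = Real.exp ω / (Real.exp ω - 1))
    (hL : 0 < L) (hU : U = L * θ)
    (ψ : ℝ → ℝ)
    (hψ : ∀ x : ℝ, ψ x = if x < ω then ((α - 1) * L / α) * Real.exp x
      else U * Real.exp (α * (x - 1))) :
    ∀ y ∈ Set.Icc ω 1, ψ y ≤ (∫ x in (0:ℝ)..y, ψ x) + (1 - 1/α) * ψ y :=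
  stmt_8_general θ ω α L U hθ hω hωeq hα hU ψ hψ
end

section
/- Let 0 < V₁ < V₂ < ⋯ < V_m be real numbers, set V₀ = 0, let q_i = 1 − V_{i−1}/V_i for i = 1, …, m (so q₁ = 1), and let q = Σ_{i=1}^m q_i. Define Q_0 = 0 and Q_i = (Σ_{j=1}^i q_j)/q. Then Q_m = 1, Q is strictly increasing, and for every i ∈ {1, …, m}: Σ_{j=1}^{i} (Q_j − Q_{j−1})·V_j = V_i/q. -/
/-!
The weights are chosen so that `q_j V_j = V_j - V_{j-1}`, and `Q_j - Q_{j-1} = q_j / q`;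
hence `∑_{j ≤ i} (Q_j - Q_{j-1}) V_j` telescopes to `(V_i - V_0) / q = V_i / q`.
Since `V` is increasing and positive, every `q_j` is positive, which makes `Q` strictly increasing.
-/

open Real Set Finset

namespace Finset

theorem sum_Icc_one_sub_pred {M : Type*} [AddCommGroup M] (f : ℕ → M) (n : ℕ) :
    ∑ j ∈ Icc 1 n, (f j - f (j - 1)) = f n - f 0 := by
  induction n with
  | zero => simp
  | succ n ih => rw [sum_Icc_succ_top (by omega), ih, Nat.add_sub_cancel]; abel

theorem sum_Icc_one_sub_sum_Icc_one_pred {M : Type*} [AddCommGroup M] (w : ℕ → M) {j : ℕ}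
    (hj : 1 ≤ j) : ∑ k ∈ Icc 1 j, w k - ∑ k ∈ Icc 1 (j - 1), w k = w j := by
  obtain ⟨i, rfl⟩ := Nat.exists_eq_add_of_le' hj
  rw [sum_Icc_succ_top (by omega), Nat.add_sub_cancel, add_sub_cancel_left]

theorem sum_Icc_one_lt_sum_Icc_one {M : Type*} [AddCommMonoid M] [PartialOrder M]
    [IsOrderedCancelAddMonoid M] {w : ℕ → M} {i j : ℕ} (hw : ∀ k ∈ Icc 1 j, 0 < w k)
    (hij : i < j) : ∑ k ∈ Icc 1 i, w k < ∑ k ∈ Icc 1 j, w k :=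
  sum_lt_sum_of_subset (Icc_subset_Icc_right hij.le) (mem_Icc.mpr ⟨by omega, le_rfl⟩)
    (by simp [mem_Icc, hij]) (hw j (mem_Icc.mpr ⟨by omega, le_rfl⟩))
    fun k hk _ => (hw k hk).le

end Finset

theorem one_sub_div_mul_cancel {K : Type*} [DivisionRing K] {a b : K} (hb : b ≠ 0) : (1 - a / b) * b = b - a := by
  rw [sub_mul, one_mul, div_mul_cancel₀ _ hb]

theorem stmt_9 (m : ℕ) (hm : 1 ≤ m) (V : ℕ → ℝ)
    (hV0 : V 0 = 0)
    (hVpos : ∀ i, 1 ≤ i → i ≤ m → 0 < V i)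
    (hVmono : ∀ i, 1 ≤ i → i < m → V i < V (i + 1))
    (q : ℕ → ℝ) (hq : ∀ i, 1 ≤ i → i ≤ m → q i = 1 - V (i - 1) / V i)
    (qtot : ℝ) (hqtot : qtot = ∑ i ∈ Finset.Icc 1 m, q i)
    (Q : ℕ → ℝ) (hQ0 : Q 0 = 0)
    (hQ : ∀ i, 1 ≤ i → i ≤ m → Q i = (∑ j ∈ Finset.Icc 1 i, q j) / qtot) :
    Q m = 1 ∧
    (∀ i j, i ≤ m → j ≤ m → i < j → Q i < Q j) ∧
    (∀ i, 1 ≤ i → i ≤ m →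
      ∑ j ∈ Finset.Icc 1 i, (Q j - Q (j - 1)) * V j = V i / qtot) := by
  have hVlt : ∀ j ∈ Finset.Icc 1 m, V (j - 1) < V j := by
    intro j hj
    obtain ⟨hj1, hjm⟩ := Finset.mem_Icc.mp hj
    rcases hj1.eq_or_lt with rfl | hj2
    · simpa [hV0] using hVpos 1 le_rfl hm
    · simpa [Nat.sub_add_cancel hj1] using hVmono (j - 1) (by omega) (by omega)
  have hqpos : ∀ j ∈ Finset.Icc 1 m, 0 < q j := by
    intro j hj
    obtain ⟨hj1, hjm⟩ := Finset.mem_Icc.mp hj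
    rw [hq j hj1 hjm, sub_pos]
    exact (div_lt_one (hVpos j hj1 hjm)).mpr (hVlt j hj)
  have hqtot_pos : 0 < qtot := hqtot ▸ Finset.sum_pos hqpos ⟨1, Finset.mem_Icc.mpr ⟨le_rfl, hm⟩⟩
  have hQ' : ∀ i ≤ m, Q i = (∑ j ∈ Finset.Icc 1 i, q j) / qtot := by
    intro i hi
    rcases Nat.eq_zero_or_pos i with rfl | hi0
    · simp [hQ0]
    · exact hQ i hi0 hi
  refine ⟨?_, fun i j hi hj hij => ?_, fun i hi1 him => ?_⟩
  · rw [hQ m hm le_rfl, ← hqtot, div_self hqtot_pos.ne']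
  · rw [hQ' i hi, hQ' j hj]
    exact div_lt_div_of_pos_right
      (Finset.sum_Icc_one_lt_sum_Icc_one (fun k hk => hqpos k (Finset.Icc_subset_Icc_right hj hk)) hij)
      hqtot_pos
  · have hsub : Finset.Icc 1 i ⊆ Finset.Icc 1 m := Finset.Icc_subset_Icc_right him
    calc ∑ j ∈ Finset.Icc 1 i, (Q j - Q (j - 1)) * V j
        = ∑ j ∈ Finset.Icc 1 i, (V j - V (j - 1)) / qtot := by
          refine Finset.sum_congr rfl fun j hj => ?_
          obtain ⟨hj1, hjm⟩ := Finset.mem_Icc.mp (hsub hj)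
          rw [hQ' j hjm, hQ' (j - 1) (by omega), ← sub_div,
            Finset.sum_Icc_one_sub_sum_Icc_one_pred q hj1, div_mul_eq_mul_div, hq j hj1 hjm,
            one_sub_div_mul_cancel (hVpos j hj1 hjm).ne']
      _ = V i / qtot := by rw [← Finset.sum_div, Finset.sum_Icc_one_sub_pred, hV0, sub_zero]
end

section
/- Let 0 < V₁ < V₂ < ⋯ < V_m, let C > 0 and q > 0, and let g : {1, …, m} → ℝ be nonnegative and satisfy g(i) ≥ C/q + (1/V_i)·Σ_{j=2}^{i} g(j−1)·(V_j − V_{j−1}) for every i ∈ {1, …, m}. Then g(i) ≥ (C/q)·(1 + Σ_{j=2}^{i} (1 − V_{j−1}/V_j)) for every i ∈ {1, …, m}. Consequently, if g(m) ≤ C, then q ≥ 1 + Σ_{j=2}^{m} (1 − V_{j−1}/V_j). -/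
open Real Set Finset

/-! The bound `a * (1 + ratioSum V i)` solves the recursive inequality with equality, because
`V i * ratioSum V i = ∑ j ∈ Icc 2 i, (1 + ratioSum V (j - 1)) * (V j - V (j - 1))`.
Since the increments `V j - V (j - 1)` are nonnegative, strong induction on `i` pushes the lower
bound on the earlier values `g (j - 1)` through the sum to `g i`. -/

noncomputable def ratioSum (V : ℕ → ℝ) (i : ℕ) : ℝ :=
  ∑ j ∈ Icc 2 i, (1 - V (j - 1) / V j)

lemma ratioSum_succ (V : ℕ → ℝ) {n : ℕ} (hn : 1 ≤ n) :
    ratioSum V (n + 1) = ratioSum V n + (1 - V n / V (n + 1)) := by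
  rw [ratioSum, sum_Icc_succ_top (by omega), Nat.add_sub_cancel, ratioSum]

lemma mul_ratioSum_eq_sum (V : ℕ → ℝ) {i : ℕ} (hV : ∀ j, 2 ≤ j → j ≤ i → V j ≠ 0) :
    V i * ratioSum V i = ∑ j ∈ Icc 2 i, (1 + ratioSum V (j - 1)) * (V j - V (j - 1)) := by
  induction i with
  | zero => simp [ratioSum]
  | succ n ih =>
    rcases Nat.eq_zero_or_pos n with rfl | hn
    · simp [ratioSum]
    have hVn : V (n + 1) ≠ 0 := hV (n + 1) (by omega) le_rfl
    rw [sum_Icc_succ_top (by omega), ← ih fun j hj hjn => hV j hj (by omega),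
      Nat.add_sub_cancel, ratioSum_succ V hn]
    field_simp
    ring

theorem mul_one_add_ratioSum_le (m : ℕ) (V : ℕ → ℝ)
    (hVpos : ∀ i, 1 ≤ i → i ≤ m → 0 < V i)
    (hVmono : ∀ i, 1 ≤ i → i < m → V i ≤ V (i + 1)) (a : ℝ) (g : ℕ → ℝ)
    (hg : ∀ i, 1 ≤ i → i ≤ m →
      a + (1 / V i) * ∑ j ∈ Icc 2 i, g (j - 1) * (V j - V (j - 1)) ≤ g i) :
    ∀ i, 1 ≤ i → i ≤ m → a * (1 + ratioSum V i) ≤ g i := by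
  intro i
  induction i using Nat.strong_induction_on with
  | _ i ih =>
    intro hi him
    have hVi : 0 < V i := hVpos i hi him
    have hsum : a * (V i * ratioSum V i) ≤ ∑ j ∈ Icc 2 i, g (j - 1) * (V j - V (j - 1)) := by
      rw [mul_ratioSum_eq_sum V fun j hj hji => (hVpos j (by omega) (by omega)).ne', mul_sum]
      refine sum_le_sum fun j hj => ?_
      rw [Finset.mem_Icc] at hj
      have hincr : V (j - 1) ≤ V j := by
        simpa [Nat.sub_add_cancel (by omega : 1 ≤ j)] using hVmono (j - 1) (by omega) (by omega)
      rw [← mul_assoc]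
      exact mul_le_mul_of_nonneg_right (ih (j - 1) (by omega) (by omega) (by omega))
        (sub_nonneg.mpr hincr)
    calc a * (1 + ratioSum V i)
        = a + 1 / V i * (a * (V i * ratioSum V i)) := by field_simp
      _ ≤ a + 1 / V i * ∑ j ∈ Icc 2 i, g (j - 1) * (V j - V (j - 1)) := by gcongr
      _ ≤ g i := hg i hi him

theorem stmt_10_general (m : ℕ) (hm : 1 ≤ m) (V : ℕ → ℝ)
    (hVpos : ∀ i, 1 ≤ i → i ≤ m → 0 < V i)
    (hVmono : ∀ i, 1 ≤ i → i < m → V i < V (i + 1))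
    (C q : ℝ) (hC : 0 < C) (hq : 0 < q)
    (g : ℕ → ℝ)
    (hg_ineq : ∀ i, 1 ≤ i → i ≤ m →
      C / q + (1 / V i) * ∑ j ∈ Finset.Icc 2 i, g (j - 1) * (V j - V (j - 1)) ≤ g i) :
    (∀ i, 1 ≤ i → i ≤ m →
      (C / q) * (1 + ∑ j ∈ Finset.Icc 2 i, (1 - V (j - 1) / V j)) ≤ g i) ∧
    (g m ≤ C → 1 + ∑ j ∈ Finset.Icc 2 m, (1 - V (j - 1) / V j) ≤ q) := by
  have key := mul_one_add_ratioSum_le m V hVpos (fun i hi him => (hVmono i hi him).le) (C / q) g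
    hg_ineq
  refine ⟨key, fun hgm => ?_⟩
  have hbound : C / q * (1 + ratioSum V m) ≤ C := (key m hm le_rfl).trans hgm
  rw [div_mul_eq_mul_div, div_le_iff₀ hq] at hbound
  exact le_of_mul_le_mul_left hbound hC

theorem stmt_10 (m : ℕ) (hm : 1 ≤ m) (V : ℕ → ℝ)
    (hVpos : ∀ i, 1 ≤ i → i ≤ m → 0 < V i)
    (hVmono : ∀ i, 1 ≤ i → i < m → V i < V (i + 1))
    (C q : ℝ) (hC : 0 < C) (hq : 0 < q)
    (g : ℕ → ℝ) (hg_nonneg : ∀ i, 1 ≤ i → i ≤ m → 0 ≤ g i)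
    (hg_ineq : ∀ i, 1 ≤ i → i ≤ m →
      C / q + (1 / V i) * ∑ j ∈ Finset.Icc 2 i, g (j - 1) * (V j - V (j - 1)) ≤ g i) :
    (∀ i, 1 ≤ i → i ≤ m →
      (C / q) * (1 + ∑ j ∈ Finset.Icc 2 i, (1 - V (j - 1) / V j)) ≤ g i) ∧
    (g m ≤ C → 1 + ∑ j ∈ Finset.Icc 2 m, (1 - V (j - 1) / V j) ≤ q) :=
  stmt_10_general m hm V hVpos hVmono C q hC hq g hg_ineq
end

section
/- Let L > 0, θ > 1, U = L·θ, C > 0, ω ∈ (0,1), and α > 0. Suppose g : [L, U] → ℝ is continuous, nondecreasing, g(L) = ω·C, and for all v ∈ (L, U]: g(v) ≥ C/α + (1/v)·∫_L^v g(u) du + (L·ω·C)/v − (L·C)/(v·α). Then g(v) ≥ ω·C + (C/α)·ln(v/L) for all v ∈ [L, U]. Consequently, if g(U) ≤ C, then α ≥ (ln θ)/(1 − ω). -/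
open Real Set

theorem stmt_16 (L θ U C ω α : ℝ) (hL : 0 < L) (hθ : 1 < θ) (hU : U = L * θ)
    (hC : 0 < C) (hω : ω ∈ Set.Ioo (0:ℝ) 1) (hα : 0 < α)
    (g : ℝ → ℝ)
    (hg_cont : ContinuousOn g (Set.Icc L U))
    (hg_mono : MonotoneOn g (Set.Icc L U))
    (hgL : g L = ω * C)
    (hg_ineq : ∀ v ∈ Set.Ioc L U,
      C / α + (1 / v) * (∫ u in L..v, g u) + L * ω * C / v - L * C / (v * α) ≤ g v) :
    (∀ v ∈ Set.Icc L U, ω * C + (C / α) * Real.log (v / L) ≤ g v) ∧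
    (g U ≤ C → Real.log θ / (1 - ω) ≤ α) := by
  obtain ⟨hω0, hω1⟩ := hω
  have hLU : L < U := by rw [hU]; nlinarith
  set K : ℝ := L * ω * C - L * C / α with hK
  set F : ℝ → ℝ := fun v => ∫ u in L..v, g u with hF
  have hFcont : ContinuousOn F (Icc L U) := by
    have : ContinuousOn F (uIcc L U) := by
      apply intervalIntegral.continuousOn_primitive_interval
      rw [uIcc_of_le hLU.le]
      exact hg_cont.integrableOn_compact isCompact_Icc
    rwa [uIcc_of_le hLU.le] at this
  set ψ : ℝ → ℝ := fun v => (F v + K) / v - (C / α) * Real.log v with hψ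
  have hvne : ∀ v ∈ Icc L U, v ≠ 0 := fun v hv => (lt_of_lt_of_le hL hv.1).ne'
  have hψcont : ContinuousOn ψ (Icc L U) := by
    apply ContinuousOn.sub
    · exact (hFcont.add continuousOn_const).div continuousOn_id hvne
    · exact continuousOn_const.mul
        (Real.continuousOn_log.mono fun v hv hv0 => hvne v hv hv0)
  -- the key multiplied-out inequality
  have hkey : ∀ v ∈ Ioc L U, C / α * v + (F v + K) ≤ g v * v := by
    intro v hv
    have hv0 : 0 < v := lt_trans hL hv.1
    have hineq := hg_ineq v hv
    have h5 := mul_le_mul_of_nonneg_right hineq hv0.le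
    have e1 : (1 / v * F v) * v = F v := by field_simp
    have e2 : (L * ω * C / v) * v = L * ω * C := by field_simp
    have e3 : (L * C / (v * α)) * v = L * C / α := by
      field_simp
    rw [hK]
    nlinarith [h5, e1, e2, e3]
  have hderiv : ∀ v ∈ Ioo L U,
      HasDerivAt ψ ((g v * v - (F v + K)) / v ^ 2 - (C / α) * v⁻¹) v := by
    intro v hv
    have hv0 : 0 < v := lt_trans hL hv.1
    have hmem : Icc L U ∈ nhds v := Icc_mem_nhds hv.1 hv.2
    have hFd : HasDerivAt F (g v) v := by
      apply intervalIntegral.integral_hasDerivAt_right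
      · apply ContinuousOn.intervalIntegrable
        apply hg_cont.mono
        rw [uIcc_of_le (le_of_lt hv.1)]
        exact Icc_subset_Icc le_rfl hv.2.le
      · exact ⟨Icc L U, hmem, hg_cont.aestronglyMeasurable measurableSet_Icc⟩
      · exact hg_cont.continuousAt hmem
    have h1 : HasDerivAt (fun v => (F v + K) / v)
        ((g v * v - (F v + K) * 1) / v ^ 2) v :=
      (hFd.add_const K).div (hasDerivAt_id v) hv0.ne'
    have h2 : HasDerivAt (fun v => (C / α) * Real.log v) ((C / α) * v⁻¹) v :=
      (Real.hasDerivAt_log hv0.ne').const_mul _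
    have h3 := h1.sub h2
    simp only [mul_one] at h3
    exact h3
  have hmono : MonotoneOn ψ (Icc L U) := by
    apply monotoneOn_of_deriv_nonneg (convex_Icc L U) hψcont
    · intro v hv
      rw [interior_Icc] at hv
      exact ((hderiv v hv).differentiableAt).differentiableWithinAt
    · intro v hv
      rw [interior_Icc] at hv
      rw [(hderiv v hv).deriv]
      have hv0 : 0 < v := lt_trans hL hv.1
      have key := hkey v ⟨hv.1, hv.2.le⟩
      have e4 : C / α * v⁻¹ = (C / α * v) / v ^ 2 := by
        field_simp
      rw [e4, sub_nonneg]
      gcongr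
      linarith [key]
  have main : ∀ v ∈ Icc L U, ω * C + (C / α) * Real.log (v / L) ≤ g v := by
    intro v hv
    rcases eq_or_lt_of_le hv.1 with h | h
    · rw [← h, div_self hL.ne', Real.log_one, hgL, mul_zero, add_zero]
    · have hv0 : 0 < v := lt_trans hL h
      have hψL : ψ L = ω * C - C / α - (C / α) * Real.log L := by
        simp only [hψ, hF]
        rw [intervalIntegral.integral_same, hK]
        field_simp
        ring
      have hψv := hmono (left_mem_Icc.mpr hLU.le) hv hv.1
      rw [hψL] at hψv
      have key := hkey v ⟨h, hv.2⟩
      have hFv : (F v + K) / v ≤ g v - C / α := by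
        rw [div_le_iff₀ hv0]
        nlinarith [key]
      have hψv2 : ω * C - C / α - (C / α) * Real.log L ≤
          (F v + K) / v - (C / α) * Real.log v := hψv
      rw [Real.log_div hv0.ne' hL.ne']
      nlinarith [hψv2, hFv]
  refine ⟨main, fun hgU => ?_⟩
  have h1 := main U (right_mem_Icc.mpr hLU.le)
  have hUL : U / L = θ := by rw [hU, mul_comm, mul_div_assoc, div_self hL.ne', mul_one]
  rw [hUL] at h1
  have hlogθ : 0 < Real.log θ := Real.log_pos hθ
  have h2 : C / α * Real.log θ ≤ (1 - ω) * C := by nlinarith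
  rw [div_le_iff₀ (by linarith : (0:ℝ) < 1 - ω)]
  have hCα : C / α * α = C := div_mul_cancel₀ C hα.ne'
  nlinarith [mul_le_mul_of_nonneg_right h2 hα.le, hCα, hC, hlogθ]
end

section
/- Let θ > 1, L > 0, U = L·θ, C > 0, ω ∈ (0,1), α > 1, and define φ : [0, C] → ℝ by φ(y) = L·(e^{y/C} − 1)/(e^ω − 1) for y ∈ [0, ω·C) and φ(y) = ((U − L)/(e^α − e^{ω·α}))·e^{α·y/C} for y ∈ [ω·C, C]. Then for every y ∈ [0, ω·C): φ(y)·C − ∫₀^y φ(z) dz ≤ (α − 1)·L·y, provided α ≥ e^ω/(e^ω − 1). -/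
open Real Set

theorem stmt_18 (θ L U C ω α : ℝ) (hθ : 1 < θ) (hL : 0 < L) (hU : U = L * θ)
    (hC : 0 < C) (hω : ω ∈ Set.Ioo (0:ℝ) 1) (hα : 1 < α)
    (hαω : Real.exp ω / (Real.exp ω - 1) ≤ α)
    (φ : ℝ → ℝ)
    (hφ : ∀ y : ℝ, φ y = if y < ω * C then L * (Real.exp (y / C) - 1) / (Real.exp ω - 1)
      else ((U - L) / (Real.exp α - Real.exp (ω * α))) * Real.exp (α * y / C)) :
    ∀ y ∈ Set.Ico (0:ℝ) (ω * C),
      φ y * C - (∫ z in (0:ℝ)..y, φ z) ≤ (α - 1) * L * y := by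
  intro y hy
  obtain ⟨hy0, hyω⟩ := hy
  have hD : 0 < Real.exp ω - 1 := by
    have h0 := hω.1
    have := Real.add_one_lt_exp (x := ω) (by exact ne_of_gt hω.1)
    linarith
  have hcong : (∫ z in (0:ℝ)..y, φ z)
      = ∫ z in (0:ℝ)..y, (L / (Real.exp ω - 1)) * (Real.exp (z / C) - 1) := by
    apply intervalIntegral.integral_congr
    intro z hz
    rw [Set.uIcc_of_le hy0] at hz
    rw [hφ, if_pos (lt_of_le_of_lt hz.2 hyω)]
    ring
  rw [hcong, intervalIntegral.integral_const_mul]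
  have hsub : (∫ z in (0:ℝ)..y, (Real.exp (z / C) - 1))
      = (∫ z in (0:ℝ)..y, Real.exp (z / C)) - ∫ z in (0:ℝ)..y, (1:ℝ) := by
    apply intervalIntegral.integral_sub
    · exact (Real.continuous_exp.comp (continuous_id.div_const C)).intervalIntegrable _ _
    · exact intervalIntegrable_const
  have hexp : (∫ z in (0:ℝ)..y, Real.exp (z / C)) = C * Real.exp (y / C) - C := by
    rw [intervalIntegral.integral_comp_div (fun x => Real.exp x) (ne_of_gt hC),
      integral_exp]
    simp [smul_eq_mul]
    ring
  have h1 : (∫ z in (0:ℝ)..y, (1:ℝ)) = y := by simp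
  rw [hsub, hexp, h1, hφ, if_pos hyω]
  rw [div_le_iff₀ hD] at hαω
  have hE : 0 ≤ Real.exp (y / C) := (Real.exp_pos _).le
  have key : L * (Real.exp (y / C) - 1) / (Real.exp ω - 1) * C -
      L / (Real.exp ω - 1) * (C * Real.exp (y / C) - C - y) = L * y / (Real.exp ω - 1) := by
    field_simp
    ring
  rw [key]
  rw [div_le_iff₀ hD]
  nlinarith [mul_nonneg hL.le hy0, mul_nonneg (mul_nonneg hL.le hy0) (sub_nonneg.2 hα.le)]
end
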